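/- An algebra H is logically perfect if and only if for every finite X, every Aut(H)-orbit in Hom(W(X),H) is an elementary set. (Abstract version: given a Boolean algebra homomorphism Val : Φ → Set P and a group G acting on P such that every set Val(u) is G-invariant, the following are equivalent: (1) for all μ, ν ∈ P, LKer(μ) = LKer(ν) implies μ and ν lie in the same G-orbit; (2) every G-orbit in P is of the form T^L for some T ⊆ Φ.) -/

import Mathlib

/-! Both conditions say that an orbit is cut out by the formulas it satisfies. Since the
value sets are closed under complement, `ν` satisfies every formula true at `μ` exactly when
`LKer ν = LKer μ`; as `LKer` is constant on orbits, the orbit of `μ` is elementary iff it is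
`LKer(μ)^L`, i.e. iff it is the whole fibre of `LKer` through `μ`. -/

section LogicalKernel

variable {Φ P : Type*} (Val : Φ → Set P)

/-- `LKer(μ)` in the paper. -/
def lKer (μ : P) : Set Φ := {u | μ ∈ Val u}

/-- `T^L` in the paper. -/
def elementarySet (T : Set Φ) : Set P := {ν | ∀ u ∈ T, ν ∈ Val u}

variable {Val}

theorem lKer_smul {G : Type*} [SMul G P]
    (hInv : ∀ (g : G) (u : Φ) (μ : P), g • μ ∈ Val u ↔ μ ∈ Val u) (g : G) (μ : P) :
    lKer Val (g • μ) = lKer Val μ :=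
  Set.ext fun u => hInv g u μ

theorem mem_elementarySet_of_lKer_eq {T : Set Φ} {μ ν : P} (hker : lKer Val μ = lKer Val ν)
    (hμ : μ ∈ elementarySet Val T) : ν ∈ elementarySet Val T :=
  fun u hu => (hker ▸ hμ u hu : u ∈ lKer Val ν)

theorem mem_elementarySet_lKer_iff [Compl Φ] (hCompl : ∀ u, Val uᶜ = (Val u)ᶜ) {μ ν : P} :
    ν ∈ elementarySet Val (lKer Val μ) ↔ lKer Val μ = lKer Val ν := by
  refine ⟨fun hν => Set.Subset.antisymm hν fun u hu => ?_,
    fun hker => mem_elementarySet_of_lKer_eq hker fun _ hu => hu⟩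
  by_contra hμ
  have hν' : ν ∈ Val uᶜ := hν uᶜ (by rw [lKer, Set.mem_ofPred_eq, hCompl]; exact hμ)
  rw [hCompl] at hν'
  exact hν' hu

end LogicalKernel

theorem logically_perfect_iff_orbits_elementary_general {Φ P G : Type*} [BooleanAlgebra Φ]
    [Group G] [MulAction G P]
    (Val : Φ → Set P)
    (hCompl : ∀ u, Val uᶜ = (Val u)ᶜ)
    (hInv : ∀ (g : G) (u : Φ) (μ : P), g • μ ∈ Val u ↔ μ ∈ Val u) :
    (∀ μ ν : P, {u : Φ | μ ∈ Val u} = {u : Φ | ν ∈ Val u} →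
        ∃ g : G, g • μ = ν) ↔
      ∀ μ : P, ∃ T : Set Φ,
        MulAction.orbit G μ = {ν : P | ∀ u ∈ T, ν ∈ Val u} := by
  constructor
  · intro hperfect μ
    refine ⟨lKer Val μ, Set.ext fun ν => ?_⟩
    change _ ↔ ν ∈ elementarySet Val (lKer Val μ)
    rw [mem_elementarySet_lKer_iff hCompl]
    constructor
    · rintro ⟨g, rfl⟩
      exact (lKer_smul hInv g μ).symm
    · exact hperfect μ ν
  · intro helem μ ν hker
    obtain ⟨T, hT⟩ := helem μ
    have hμ : μ ∈ elementarySet Val T := by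
      rw [elementarySet, ← hT]
      exact MulAction.mem_orbit_self μ
    have hν : ν ∈ elementarySet Val T := mem_elementarySet_of_lKer_eq hker hμ
    rwa [elementarySet, ← hT] at hν

/-- An algebra is logically perfect iff every orbit of the automorphism group is
an elementary set (abstract version: `G` acts on the set of points `P`, each
value set is `G`-invariant). -/
theorem logically_perfect_iff_orbits_elementary {Φ P G : Type*} [BooleanAlgebra Φ]
    [Group G] [MulAction G P]
    (Val : Φ → Set P)
    (hTop : Val ⊤ = Set.univ) (hBot : Val ⊥ = ∅)
    (hInf : ∀ u v, Val (u ⊓ v) = Val u ∩ Val v)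
    (hSup : ∀ u v, Val (u ⊔ v) = Val u ∪ Val v)
    (hCompl : ∀ u, Val uᶜ = (Val u)ᶜ)
    (hInv : ∀ (g : G) (u : Φ) (μ : P), g • μ ∈ Val u ↔ μ ∈ Val u) :
    (∀ μ ν : P, {u : Φ | μ ∈ Val u} = {u : Φ | ν ∈ Val u} →
        ∃ g : G, g • μ = ν) ↔
      ∀ μ : P, ∃ T : Set Φ,
        MulAction.orbit G μ = {ν : P | ∀ u ∈ T, ν ∈ Val u} :=
  logically_perfect_iff_orbits_elementary_general Val hCompl hInv
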